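/- arXiv:2507.07428 — 9 statements merged into one kernel-verified Lean document; each statement's English description precedes it below -/
import Mathlib

section
/- Let A be a maximally monotone operator on a real Hilbert space X and let α, β > 0. Then the operator (α/β)·Id + (1 − α/β)·J_{βA} : X → X is a bijection whose inverse is (β/α)·Id + (1 − β/α)·J_{αA}. -/
open Filter
open scoped RealInnerProductSpace NNReal

/-- A set-valued operator is monotone. -/
def IsMonotoneOp {X : Type*} [NormedAddCommGroup X] [InnerProductSpace ℝ X]
    (A : X → Set X) : Prop :=
  ∀ ⦃x y u v : X⦄, u ∈ A x → v ∈ A y → 0 ≤ ⟪x - y, u - v⟫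

/-- A set-valued operator is maximally monotone. -/
def IsMaximalMonotoneOp {X : Type*} [NormedAddCommGroup X] [InnerProductSpace ℝ X]
    (A : X → Set X) : Prop :=
  IsMonotoneOp A ∧
    ∀ x u : X, (∀ y v : X, v ∈ A y → 0 ≤ ⟪x - y, u - v⟫) → u ∈ A x

/-- `J` is the resolvent of `γ • A`, i.e. `J = (Id + γ A)⁻¹`:
for every `x`, `x ∈ J x + γ • A (J x)`. -/
def IsResolventOf {X : Type*} [NormedAddCommGroup X] [InnerProductSpace ℝ X]
    (J : X → X) (A : X → Set X) (γ : ℝ) : Prop :=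
  ∀ x : X, γ⁻¹ • (x - J x) ∈ A (J x)

/-! The resolvent `J_{αA}` is pinned down by the inclusion `α⁻¹ (z - J z) ∈ A (J z)`. Writing
`z = (α/β) x + (1 - α/β) J_{βA} x`, one has `α⁻¹ (z - J_{βA} x) = β⁻¹ (x - J_{βA} x) ∈ A (J_{βA} x)`,
hence `J_{αA} z = J_{βA} x`; solving the definition of `z` for `x` then shows that
`(β/α) Id + (1 - β/α) J_{αA}` is a left inverse. Exchanging `α` and `β` gives a right inverse. -/

section Resolvent

variable {X : Type*} [NormedAddCommGroup X] [InnerProductSpace ℝ X] {A : X → Set X}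

theorem IsMonotoneOp.eq_of_resolvent_mem (hA : IsMonotoneOp A) {γ : ℝ} (hγ : 0 < γ)
    {z u v : X} (hu : γ⁻¹ • (z - u) ∈ A u) (hv : γ⁻¹ • (z - v) ∈ A v) : u = v := by
  have hinner : ⟪u - v, γ⁻¹ • (z - u) - γ⁻¹ • (z - v)⟫ = -(γ⁻¹ * ‖u - v‖ ^ 2) := by
    rw [← smul_sub, real_inner_smul_right, sub_sub_sub_cancel_left, ← neg_sub u v,
      inner_neg_right, real_inner_self_eq_norm_sq, mul_neg]
  have hmono := hA hu hv
  rw [hinner, neg_nonneg] at hmono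
  have hnorm : ‖u - v‖ ^ 2 ≤ 0 := nonpos_of_mul_nonpos_right hmono (inv_pos.mpr hγ)
  simpa [sub_eq_zero] using le_antisymm hnorm (sq_nonneg _)

theorem IsResolventOf.apply_eq_of_mem {J : X → X} {γ : ℝ} (hJ : IsResolventOf J A γ)
    (hA : IsMonotoneOp A) (hγ : 0 < γ) {z u : X} (hu : γ⁻¹ • (z - u) ∈ A u) : J z = u :=
  hA.eq_of_resolvent_mem hγ (hJ z) hu

theorem IsResolventOf.leftInverse_combination {Jα Jβ : X → X} {α β : ℝ}
    (hA : IsMonotoneOp A) (hα : 0 < α) (hβ : 0 < β)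
    (hJα : IsResolventOf Jα A α) (hJβ : IsResolventOf Jβ A β) :
    Function.LeftInverse (fun x : X => (β / α) • x + (1 - β / α) • Jα x)
      (fun x : X => (α / β) • x + (1 - α / β) • Jβ x) := by
  intro x
  have hrescale : α⁻¹ • ((α / β) • x + (1 - α / β) • Jβ x - Jβ x) = β⁻¹ • (x - Jβ x) := by
    match_scalars <;> grind
  have hJ : Jα ((α / β) • x + (1 - α / β) • Jβ x) = Jβ x :=
    hJα.apply_eq_of_mem hA hα (hrescale ▸ hJβ x)
  simp only [hJ]
  match_scalars <;> grind

end Resolvent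

theorem resolvent_combination_bijective_general
    {X : Type*} [NormedAddCommGroup X] [InnerProductSpace ℝ X]
    (A : X → Set X) (hA : IsMaximalMonotoneOp A)
    (α β : ℝ) (hα : 0 < α) (hβ : 0 < β)
    (Jα Jβ : X → X)
    (hJα : IsResolventOf Jα A α) (hJβ : IsResolventOf Jβ A β) :
    Function.Bijective (fun x : X => (α / β) • x + (1 - α / β) • Jβ x) ∧
    Function.LeftInverse (fun x : X => (β / α) • x + (1 - β / α) • Jα x)
      (fun x : X => (α / β) • x + (1 - α / β) • Jβ x) ∧
    Function.RightInverse (fun x : X => (β / α) • x + (1 - β / α) • Jα x)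
      (fun x : X => (α / β) • x + (1 - α / β) • Jβ x) := by
  have hL := IsResolventOf.leftInverse_combination hA.1 hα hβ hJα hJβ
  have hR := IsResolventOf.leftInverse_combination hA.1 hβ hα hJβ hJα
  exact ⟨⟨hL.injective, hR.surjective⟩, hL, hR⟩

theorem resolvent_combination_bijective
    {X : Type*} [NormedAddCommGroup X] [InnerProductSpace ℝ X] [CompleteSpace X]
    (A : X → Set X) (hA : IsMaximalMonotoneOp A)
    (α β : ℝ) (hα : 0 < α) (hβ : 0 < β)
    (Jα Jβ : X → X)
    (hJα : IsResolventOf Jα A α) (hJβ : IsResolventOf Jβ A β) :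
    Function.Bijective (fun x : X => (α / β) • x + (1 - α / β) • Jβ x) ∧
    Function.LeftInverse (fun x : X => (β / α) • x + (1 - β / α) • Jα x)
      (fun x : X => (α / β) • x + (1 - α / β) • Jβ x) ∧
    Function.RightInverse (fun x : X => (β / α) • x + (1 - β / α) • Jα x)
      (fun x : X => (α / β) • x + (1 - α / β) • Jβ x) :=
  resolvent_combination_bijective_general A hA α β hα hβ Jα Jβ hJα hJβ
end

section
/- Let A be maximally monotone on a real Hilbert space X, let α, β > 0 with β ≥ α, and set Q := (β/α)·Id + (1 − β/α)·J_{αA}. Then for all z, z̄ ∈ X: ‖Qz − Qz̄‖² + (β²/α² − 1)·‖J_{αA}z − J_{αA}z̄‖² ≤ (β²/α²)·‖z − z̄‖². In particular Q is (β/α)-Lipschitz continuous. -/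
open Filter
open scoped RealInnerProductSpace NNReal

section

variable {X : Type*} [NormedAddCommGroup X] [InnerProductSpace ℝ X]

theorem IsResolventOf.norm_sub_sq_le_inner {A : X → Set X} {J : X → X} {γ : ℝ}
    (hJ : IsResolventOf J A γ) (hA : IsMonotoneOp A) (hγ : 0 < γ) (x y : X) :
    ‖J x - J y‖ ^ 2 ≤ ⟪x - y, J x - J y⟫ := by
  have hmono := hA (hJ x) (hJ y)
  rw [← smul_sub, real_inner_smul_right] at hmono
  have hinner : 0 ≤ ⟪J x - J y, (x - y) - (J x - J y)⟫ := by
    have := nonneg_of_mul_nonneg_right hmono (inv_pos.mpr hγ)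
    rwa [show x - J x - (y - J y) = (x - y) - (J x - J y) by abel] at this
  rw [inner_sub_right, real_inner_self_eq_norm_sq, real_inner_comm] at hinner
  linarith

theorem norm_smul_add_one_sub_smul_sq_add (t : ℝ) (d p : X) :
    ‖t • d + (1 - t) • p‖ ^ 2 + (t ^ 2 - 1) * ‖p‖ ^ 2
      = t ^ 2 * ‖d‖ ^ 2 - 2 * (t * (t - 1)) * (⟪d, p⟫ - ‖p‖ ^ 2) := by
  rw [norm_add_sq_real, real_inner_smul_left, real_inner_smul_right, norm_smul, norm_smul,
    mul_pow, mul_pow, Real.norm_eq_abs, Real.norm_eq_abs, sq_abs, sq_abs]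
  ring

section FirmlyNonexpansive

variable {J : X → X} (hJ : ∀ x y, ‖J x - J y‖ ^ 2 ≤ ⟪x - y, J x - J y⟫)
include hJ

theorem norm_relocate_sub_sq_add_le {t : ℝ} (ht : 0 ≤ t * (t - 1)) (z z' : X) :
    ‖(t • z + (1 - t) • J z) - (t • z' + (1 - t) • J z')‖ ^ 2
        + (t ^ 2 - 1) * ‖J z - J z'‖ ^ 2
      ≤ t ^ 2 * ‖z - z'‖ ^ 2 := by
  rw [show (t • z + (1 - t) • J z) - (t • z' + (1 - t) • J z')
      = t • (z - z') + (1 - t) • (J z - J z') by module,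
    norm_smul_add_one_sub_smul_sq_add]
  have := mul_nonneg ht (sub_nonneg.mpr (hJ z z'))
  linarith

theorem norm_relocate_sub_le {t : ℝ} (ht : 1 ≤ t) (z z' : X) :
    ‖(t • z + (1 - t) • J z) - (t • z' + (1 - t) • J z')‖ ≤ t * ‖z - z'‖ := by
  have hsq := norm_relocate_sub_sq_add_le hJ (by nlinarith) z z'
  have hgap : 0 ≤ (t ^ 2 - 1) * ‖J z - J z'‖ ^ 2 := by
    apply mul_nonneg _ (sq_nonneg _)
    nlinarith
  refine le_of_pow_le_pow_left₀ two_ne_zero (by positivity) ?_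
  rw [mul_pow]
  linarith

end FirmlyNonexpansive

end

theorem relocator_lipschitz_of_ge_general
    {X : Type*} [NormedAddCommGroup X] [InnerProductSpace ℝ X]
    (A : X → Set X) (hA : IsMaximalMonotoneOp A)
    (α β : ℝ) (hα : 0 < α) (hβα : α ≤ β)
    (Jα : X → X) (hJα : IsResolventOf Jα A α) :
    (∀ z z' : X,
      ‖((β / α) • z + (1 - β / α) • Jα z) - ((β / α) • z' + (1 - β / α) • Jα z')‖^2
        + (β^2 / α^2 - 1) * ‖Jα z - Jα z'‖^2
      ≤ (β^2 / α^2) * ‖z - z'‖^2) ∧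
    (∀ z z' : X,
      ‖((β / α) • z + (1 - β / α) • Jα z) - ((β / α) • z' + (1 - β / α) • Jα z')‖
        ≤ (β / α) * ‖z - z'‖) := by
  have hfirm := hJα.norm_sub_sq_le_inner hA.1 hα
  have ht : 1 ≤ β / α := (one_le_div hα).mpr hβα
  rw [← div_pow]
  exact ⟨norm_relocate_sub_sq_add_le hfirm (by nlinarith), norm_relocate_sub_le hfirm ht⟩

theorem relocator_lipschitz_of_ge
    {X : Type*} [NormedAddCommGroup X] [InnerProductSpace ℝ X] [CompleteSpace X]
    (A : X → Set X) (hA : IsMaximalMonotoneOp A)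
    (α β : ℝ) (hα : 0 < α) (hβ : 0 < β) (hβα : α ≤ β)
    (Jα : X → X) (hJα : IsResolventOf Jα A α) :
    (∀ z z' : X,
      ‖((β / α) • z + (1 - β / α) • Jα z) - ((β / α) • z' + (1 - β / α) • Jα z')‖^2
        + (β^2 / α^2 - 1) * ‖Jα z - Jα z'‖^2
      ≤ (β^2 / α^2) * ‖z - z'‖^2) ∧
    (∀ z z' : X,
      ‖((β / α) • z + (1 - β / α) • Jα z) - ((β / α) • z' + (1 - β / α) • Jα z')‖
        ≤ (β / α) * ‖z - z'‖) :=
  relocator_lipschitz_of_ge_general A hA α β hα hβα Jα hJα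
end

section
/- Let A, B be maximally monotone on a real Hilbert space X, and for γ > 0 let T_γ := Id − J_{γA} + J_{γB}(2J_{γA} − Id) be the Douglas–Rachford operator. For α, β > 0, the map (β/α)·Id + (1 − β/α)·J_{αA}, restricted to Fix T_α, is a bijection from Fix T_α onto Fix T_β, with inverse given by the restriction of (α/β)·Id + (1 − α/β)·J_{βA} to Fix T_β. -/
open Filter
open scoped RealInnerProductSpace NNReal

/-!
At a fixed point `x` of `T_α` put `p := J_{αA} x`. Then `α⁻¹ (x - p) ∈ A p` and, because
`J_{αB} (2p - x) = p`, also `α⁻¹ (p - x) ∈ B p`. The point `y := p + (β/α)(x - p)` satisfies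
`β⁻¹ (y - p) = α⁻¹ (x - p)`, so by uniqueness of resolvent values `J_{βA} y = p` and
`J_{βB} (2p - y) = p`, i.e. `y ∈ Fix T_β`. The roles of `α` and `β` are symmetric, and the
inverse map recovers `x = p + (α/β)(y - p)` from `J_{βA} y = p`.
-/

section

variable {X : Type*} [NormedAddCommGroup X] [InnerProductSpace ℝ X]

lemma IsMonotoneOp.resolvent_eq_of_mem {A : X → Set X} (hA : IsMonotoneOp A) {J : X → X}
    {γ : ℝ} (hγ : 0 < γ) (hJ : IsResolventOf J A γ) {y q : X} (hq : γ⁻¹ • (y - q) ∈ A q) :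
    J y = q := by
  have hmono := hA (hJ y) hq
  have hdiff : γ⁻¹ • (y - J y) - γ⁻¹ • (y - q) = -(γ⁻¹ • (J y - q)) := by module
  rw [hdiff, inner_neg_right, real_inner_smul_right, real_inner_self_eq_norm_sq] at hmono
  have hsq : ‖J y - q‖ ^ 2 = 0 := le_antisymm (by nlinarith [inv_pos.2 hγ]) (sq_nonneg _)
  simpa [sub_eq_zero] using hsq

/-- The argument is `J x + (β/α) (x - J x)`: rescaling `x - J x` by `β/α` keeps the resolvent. -/
lemma IsMonotoneOp.resolvent_rescale {A : X → Set X} (hA : IsMonotoneOp A) {J J' : X → X}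
    {α β : ℝ} (hα : α ≠ 0) (hβ : 0 < β) (hJ : IsResolventOf J A α)
    (hJ' : IsResolventOf J' A β) (x : X) :
    J' ((β / α) • x + (1 - β / α) • J x) = J x := by
  refine hA.resolvent_eq_of_mem hβ hJ' ?_
  have hscale : β⁻¹ • ((β / α) • x + (1 - β / α) • J x - J x) = α⁻¹ • (x - J x) := by
    match_scalars
    · field_simp
    · field_simp; ring
  simpa only [hscale] using hJ x

/-- `Fix T_γ` for the Douglas–Rachford operator `T_γ = Id - J_{γA} + J_{γB} R_{γA}`. -/
def drFix (JA JB : ℝ → X → X) (γ : ℝ) : Set X :=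
  {x | x - JA γ x + JB γ ((2:ℝ) • JA γ x - x) = x}

lemma mem_drFix_iff {JA JB : ℝ → X → X} {γ : ℝ} {x : X} :
    x ∈ drFix JA JB γ ↔ JB γ ((2:ℝ) • JA γ x - x) = JA γ x := by
  rw [drFix, Set.mem_ofPred_eq]
  constructor <;> intro h <;> linear_combination (norm := module) h

noncomputable def drShift (JA : ℝ → X → X) (α β : ℝ) (x : X) : X :=
  (β / α) • x + (1 - β / α) • JA α x

section Rescale

variable {A B : X → Set X} (hA : IsMonotoneOp A) (hB : IsMonotoneOp B) {JA JB : ℝ → X → X}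
  (hJA : ∀ γ : ℝ, 0 < γ → IsResolventOf (JA γ) A γ)
  (hJB : ∀ γ : ℝ, 0 < γ → IsResolventOf (JB γ) B γ) {α β : ℝ} (hα : 0 < α) (hβ : 0 < β)
include hA hJA hα hβ

lemma resolvent_drShift (x : X) : JA β (drShift JA α β x) = JA α x :=
  hA.resolvent_rescale hα.ne' hβ (hJA α hα) (hJA β hβ) x

lemma drShift_drShift (x : X) : drShift JA β α (drShift JA α β x) = x := by
  rw [drShift, resolvent_drShift hA hJA hα hβ, drShift]
  match_scalars
  · field_simp
  · field_simp; ring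

include hB hJB in
lemma mapsTo_drShift : Set.MapsTo (drShift JA α β) (drFix JA JB α) (drFix JA JB β) := by
  intro x hx
  rw [mem_drFix_iff] at hx ⊢
  rw [resolvent_drShift hA hJA hα hβ]
  set p := JA α x
  have hreflect : (2:ℝ) • p - drShift JA α β x
      = (β / α) • ((2:ℝ) • p - x) + (1 - β / α) • JB α ((2:ℝ) • p - x) := by
    rw [hx, drShift]; module
  rw [hreflect, hB.resolvent_rescale hα.ne' hβ (hJB α hα) (hJB β hβ), hx]

end Rescale

end

theorem DR_fixedPoint_bijection_general
    {X : Type*} [NormedAddCommGroup X] [InnerProductSpace ℝ X]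
    (A B : X → Set X) (hA : IsMaximalMonotoneOp A) (hB : IsMaximalMonotoneOp B)
    (JA JB : ℝ → X → X)
    (hJA : ∀ γ : ℝ, 0 < γ → IsResolventOf (JA γ) A γ)
    (hJB : ∀ γ : ℝ, 0 < γ → IsResolventOf (JB γ) B γ)
    (α β : ℝ) (hα : 0 < α) (hβ : 0 < β) :
    Set.BijOn (fun x : X => (β / α) • x + (1 - β / α) • JA α x)
      {x : X | x - JA α x + JB α ((2:ℝ) • JA α x - x) = x}
      {x : X | x - JA β x + JB β ((2:ℝ) • JA β x - x) = x} ∧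
    Set.InvOn (fun x : X => (α / β) • x + (1 - α / β) • JA β x)
      (fun x : X => (β / α) • x + (1 - β / α) • JA α x)
      {x : X | x - JA α x + JB α ((2:ℝ) • JA α x - x) = x}
      {x : X | x - JA β x + JB β ((2:ℝ) • JA β x - x) = x} := by
  have hinv : Set.InvOn (drShift JA β α) (drShift JA α β) (drFix JA JB α) (drFix JA JB β) :=
    ⟨fun x _ => drShift_drShift hA.1 hJA hα hβ x, fun x _ => drShift_drShift hA.1 hJA hβ hα x⟩
  exact ⟨hinv.bijOn (mapsTo_drShift hA.1 hB.1 hJA hJB hα hβ)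
    (mapsTo_drShift hA.1 hB.1 hJA hJB hβ hα), hinv⟩

theorem DR_fixedPoint_bijection
    {X : Type*} [NormedAddCommGroup X] [InnerProductSpace ℝ X] [CompleteSpace X]
    (A B : X → Set X) (hA : IsMaximalMonotoneOp A) (hB : IsMaximalMonotoneOp B)
    (JA JB : ℝ → X → X)
    (hJA : ∀ γ : ℝ, 0 < γ → IsResolventOf (JA γ) A γ)
    (hJB : ∀ γ : ℝ, 0 < γ → IsResolventOf (JB γ) B γ)
    (α β : ℝ) (hα : 0 < α) (hβ : 0 < β) :
    Set.BijOn (fun x : X => (β / α) • x + (1 - β / α) • JA α x)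
      {x : X | x - JA α x + JB α ((2:ℝ) • JA α x - x) = x}
      {x : X | x - JA β x + JB β ((2:ℝ) • JA β x - x) = x} ∧
    Set.InvOn (fun x : X => (α / β) • x + (1 - α / β) • JA β x)
      (fun x : X => (β / α) • x + (1 - β / α) • JA α x)
      {x : X | x - JA α x + JB α ((2:ℝ) • JA α x - x) = x}
      {x : X | x - JA β x + JB β ((2:ℝ) • JA β x - x) = x} :=
  DR_fixedPoint_bijection_general A B hA hB JA JB hJA hJB α β hα hβ
end

section
/- Parametric demiclosedness principle: Let D ⊆ X be a nonempty weakly sequentially closed subset of a real Hilbert space X, Γ ⊆ ℝ a nonempty closed set, and (T_γ)_{γ∈Γ} a family of nonexpansive operators from D to X such that for each x ∈ D the map γ ↦ T_γ x is norm-continuous. If (x_n) ⊆ D converges weakly to x ∈ D, γ_n → γ̄ in Γ, and x_n − T_{γ_n} x_n → u strongly, then x − T_{γ̄} x = u. -/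
/-!
Put `vₙ = x - (xₙ - T_{γₙ} xₙ) - T_{γₙ} x`, so that `(xₙ - x) + vₙ = T_{γₙ} xₙ - T_{γₙ} x` and, by
nonexpansiveness, `2⟪xₙ - x, vₙ⟫ + ‖vₙ‖² ≤ 0`. By continuity in the parameter, `vₙ` converges strongly
to `v = x - u - T_γ̄ x`, while `xₙ - x ⇀ 0` is bounded (uniform boundedness), so the inner product
tends to `0` and `‖v‖² ≤ 0`.
-/

open Filter
open scoped RealInnerProductSpace NNReal

open Topology

section WeakConvergence

variable {E : Type*} [NormedAddCommGroup E] [InnerProductSpace ℝ E]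

theorem exists_norm_le_of_tendsto_inner [CompleteSpace E] {x : ℕ → E} {a : E}
    (hx : ∀ y, Tendsto (fun n => ⟪y, x n⟫) atTop (𝓝 ⟪y, a⟫)) : ∃ C, ∀ n, ‖x n‖ ≤ C := by
  obtain ⟨C, hC⟩ := banach_steinhaus (g := fun n => innerSL ℝ (x n)) fun y => by
    obtain ⟨C, hC⟩ := (hx y).abs.bddAbove_range
    exact ⟨C, fun n => by simpa [real_inner_comm] using hC ⟨n, rfl⟩⟩
  exact ⟨C, fun n => by simpa using hC n⟩

theorem tendsto_inner_of_tendsto_inner_of_tendsto [CompleteSpace E] {x v : ℕ → E} {a b : E}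
    (hx : ∀ y, Tendsto (fun n => ⟪y, x n⟫) atTop (𝓝 ⟪y, a⟫)) (hv : Tendsto v atTop (𝓝 b)) :
    Tendsto (fun n => ⟪x n, v n⟫) atTop (𝓝 ⟪a, b⟫) := by
  obtain ⟨C, hC⟩ := exists_norm_le_of_tendsto_inner hx
  have hmain : Tendsto (fun n => ⟪x n, b⟫) atTop (𝓝 ⟪a, b⟫) := by
    simpa only [real_inner_comm b] using hx b
  have herr : Tendsto (fun n => ⟪x n, v n - b⟫) atTop (𝓝 0) := by
    have hvb : Tendsto (fun n => ‖v n - b‖) atTop (𝓝 0) := by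
      simpa using (hv.sub_const b).norm
    refine squeeze_zero_norm (fun n => ?_) (by simpa using hvb.const_mul C)
    calc ‖⟪x n, v n - b⟫‖ ≤ ‖x n‖ * ‖v n - b‖ := norm_inner_le_norm _ _
      _ ≤ C * ‖v n - b‖ := by gcongr; exact hC n
  simpa [← inner_add_right] using hmain.add herr

theorem eq_zero_of_norm_sub_add_le [CompleteSpace E] {x v : ℕ → E} {a b : E}
    (hx : ∀ y, Tendsto (fun n => ⟪y, x n⟫) atTop (𝓝 ⟪y, a⟫)) (hv : Tendsto v atTop (𝓝 b))
    (hle : ∀ n, ‖x n - a + v n‖ ≤ ‖x n - a‖) : b = 0 := by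
  have hineq : ∀ n, 2 * ⟪x n - a, v n⟫ + ‖v n‖ ^ 2 ≤ 0 := fun n => by
    have hsq := pow_le_pow_left₀ (norm_nonneg _) (hle n) 2
    rw [norm_add_sq_real] at hsq
    linarith
  have hpair : Tendsto (fun n => ⟪x n - a, v n⟫) atTop (𝓝 0) := by
    have := (tendsto_inner_of_tendsto_inner_of_tendsto hx hv).sub
      ((tendsto_const_nhds (x := a)).inner hv)
    simpa only [← inner_sub_left, sub_self] using this
  have hlim := (hpair.const_mul 2).add (hv.norm.pow 2)
  rw [mul_zero, zero_add] at hlim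
  have hb : ‖b‖ ^ 2 ≤ 0 := le_of_tendsto hlim (Eventually.of_forall hineq)
  exact norm_eq_zero.mp (by nlinarith [norm_nonneg b])

end WeakConvergence

theorem parametric_demiclosedness_principle_general
    {X : Type*} [NormedAddCommGroup X] [InnerProductSpace ℝ X] [CompleteSpace X]
    (D : Set X)
    (Γ : Set ℝ)
    (T : ℝ → X → X)
    (hTnonexp : ∀ γ ∈ Γ, ∀ x ∈ D, ∀ y ∈ D, ‖T γ x - T γ y‖ ≤ ‖x - y‖)
    (hTcont : ∀ x ∈ D, ContinuousOn (fun γ => T γ x) Γ)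
    (xseq : ℕ → X) (hxD : ∀ n, xseq n ∈ D) (x : X) (hxmem : x ∈ D)
    (hweak : ∀ y : X, Tendsto (fun n => ⟪y, xseq n⟫) atTop (nhds ⟪y, x⟫))
    (γseq : ℕ → ℝ) (hγΓ : ∀ n, γseq n ∈ Γ)
    (γbar : ℝ) (hγbar : γbar ∈ Γ)
    (hγconv : Tendsto γseq atTop (nhds γbar))
    (u : X)
    (hu : Tendsto (fun n => xseq n - T (γseq n) (xseq n)) atTop (nhds u)) :
    x - T γbar x = u := by
  have hTx : Tendsto (fun n => T (γseq n) x) atTop (𝓝 (T γbar x)) :=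
    (hTcont x hxmem γbar hγbar).tendsto.comp
      (tendsto_nhdsWithin_iff.mpr ⟨hγconv, Eventually.of_forall hγΓ⟩)
  have hv : x - u - T γbar x = 0 := by
    refine eq_zero_of_norm_sub_add_le hweak ((tendsto_const_nhds.sub hu).sub hTx) fun n => ?_
    calc ‖xseq n - x + (x - (xseq n - T (γseq n) (xseq n)) - T (γseq n) x)‖
        = ‖T (γseq n) (xseq n) - T (γseq n) x‖ := by congr 1; abel
      _ ≤ ‖xseq n - x‖ := hTnonexp _ (hγΓ n) _ (hxD n) _ hxmem
  rwa [sub_sub, sub_eq_zero, ← sub_eq_iff_eq_add] at hv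

theorem parametric_demiclosedness_principle
    {X : Type*} [NormedAddCommGroup X] [InnerProductSpace ℝ X] [CompleteSpace X]
    (D : Set X) (hDne : D.Nonempty)
    (hDweakclosed : ∀ (z : ℕ → X) (w : X), (∀ n, z n ∈ D) →
      (∀ y : X, Tendsto (fun n => ⟪y, z n⟫) atTop (nhds ⟪y, w⟫)) → w ∈ D)
    (Γ : Set ℝ) (hΓne : Γ.Nonempty) (hΓcl : IsClosed Γ)
    (T : ℝ → X → X)
    (hTnonexp : ∀ γ ∈ Γ, ∀ x ∈ D, ∀ y ∈ D, ‖T γ x - T γ y‖ ≤ ‖x - y‖)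
    (hTcont : ∀ x ∈ D, ContinuousOn (fun γ => T γ x) Γ)
    (xseq : ℕ → X) (hxD : ∀ n, xseq n ∈ D) (x : X) (hxmem : x ∈ D)
    (hweak : ∀ y : X, Tendsto (fun n => ⟪y, xseq n⟫) atTop (nhds ⟪y, x⟫))
    (γseq : ℕ → ℝ) (hγΓ : ∀ n, γseq n ∈ Γ)
    (γbar : ℝ) (hγbar : γbar ∈ Γ)
    (hγconv : Tendsto γseq atTop (nhds γbar))
    (u : X)
    (hu : Tendsto (fun n => xseq n - T (γseq n) (xseq n)) atTop (nhds u)) :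
    x - T γbar x = u :=
  parametric_demiclosedness_principle_general D Γ T hTnonexp hTcont xseq hxD x hxmem hweak γseq hγΓ
    γbar hγbar hγconv u hu
end

section
/- Deterministic Robbins–Siegmund lemma: Let (α_n), (β_n), (ε_n) be sequences of nonnegative reals with Σ_n ε_n < ∞ and α_{n+1} ≤ (1 + ε_n)α_n − β_n for all n. Then (α_n) converges and Σ_n β_n < ∞. -/
/-!
Dividing by `P n = ∏_{k<n} (1 + e k)` removes the multiplicative perturbation: `c n = a n / P n`
satisfies `c (n+1) + b n / P (n+1) ≤ c n`. So `c` is nonincreasing and nonnegative, hence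
convergent, and the sums of `b n / P (n+1)` telescope below `c 0`. Since `P` converges (to
`∏' (1 + e k)`) and is bounded by `exp (∑' e k)`, both conclusions carry over to `a = c * P`
and to `b`.
-/

open Filter Finset

theorem tendsto_and_summable_of_succ_add_le {c d : ℕ → ℝ} (hc : ∀ n, 0 ≤ c n)
    (hd : ∀ n, 0 ≤ d n) (h : ∀ n, c (n + 1) + d n ≤ c n) :
    (∃ l, Tendsto c atTop (nhds l)) ∧ Summable d := by
  have hanti : Antitone c := antitone_nat_of_succ_le fun n => by linarith [h n, hd n]
  refine ⟨⟨_, tendsto_atTop_ciInf hanti ⟨0, fun _ ⟨n, hn⟩ => hn ▸ hc n⟩⟩, ?_⟩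
  refine summable_of_sum_range_le hd (c := c 0) fun n => ?_
  calc ∑ k ∈ range n, d k ≤ ∑ k ∈ range n, (c k - c (k + 1)) :=
        sum_le_sum fun k _ => by linarith [h k]
    _ = c 0 - c n := sum_range_sub' c n
    _ ≤ c 0 := by linarith [hc n]

section OneAddProd

variable {e : ℕ → ℝ}

theorem prod_range_one_add_pos (he : ∀ n, 0 ≤ e n) (n : ℕ) :
    0 < ∏ k ∈ range n, (1 + e k) :=
  prod_pos fun k _ => by linarith [he k]

theorem prod_range_one_add_le_exp_tsum (he : ∀ n, 0 ≤ e n) (hesum : Summable e) (n : ℕ) :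
    ∏ k ∈ range n, (1 + e k) ≤ Real.exp (∑' k, e k) :=
  (Real.prod_one_add_le_exp_sum _ he).trans <|
    Real.exp_le_exp.2 (hesum.sum_le_tsum _ fun k _ => he k)

theorem div_prod_range_one_add_succ_add_le {a b : ℕ → ℝ} (he : ∀ n, 0 ≤ e n)
    (hrec : ∀ n, a (n + 1) ≤ (1 + e n) * a n - b n) (n : ℕ) :
    a (n + 1) / ∏ k ∈ range (n + 1), (1 + e k) + b n / ∏ k ∈ range (n + 1), (1 + e k) ≤
      a n / ∏ k ∈ range n, (1 + e k) := by
  have hen : 0 < 1 + e n := by linarith [he n]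
  rw [← add_div, prod_range_succ, ← div_div, div_right_comm, div_le_div_iff_of_pos_right
    (prod_range_one_add_pos he n), div_le_iff₀ hen]
  linarith [hrec n]

end OneAddProd

theorem robbins_siegmund_deterministic
    (a b e : ℕ → ℝ)
    (ha : ∀ n, 0 ≤ a n) (hb : ∀ n, 0 ≤ b n) (he : ∀ n, 0 ≤ e n)
    (hesum : Summable e)
    (hrec : ∀ n, a (n + 1) ≤ (1 + e n) * a n - b n) :
    (∃ l : ℝ, Tendsto a atTop (nhds l)) ∧ Summable b := by
  set P : ℕ → ℝ := fun n => ∏ k ∈ range n, (1 + e k)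
  have hP : ∀ n, 0 < P n := prod_range_one_add_pos he
  obtain ⟨⟨l, hl⟩, hsum⟩ := tendsto_and_summable_of_succ_add_le
    (c := fun n => a n / P n) (d := fun n => b n / P (n + 1))
    (fun n => div_nonneg (ha n) (hP n).le) (fun n => div_nonneg (hb n) (hP _).le)
    (div_prod_range_one_add_succ_add_le he hrec)
  refine ⟨⟨l * ∏' k, (1 + e k), ?_⟩, ?_⟩
  · exact (hl.mul (Real.multipliable_one_add_of_summable hesum).tendsto_prod_tprod_nat).congr
      fun n => div_mul_cancel₀ _ (hP n).ne'
  · refine (hsum.mul_left (Real.exp (∑' k, e k))).of_nonneg_of_le hb fun n => ?_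
    rw [mul_div_assoc', le_div_iff₀ (hP _), mul_comm]
    exact mul_le_mul_of_nonneg_right (prod_range_one_add_le_exp_tsum he hesum _) (hb n)
end

section
/- Let (x_n) be a sequence in a real Hilbert space X that is Opial with respect to a nonempty set C ⊆ X (i.e., for every c ∈ C, lim_n ‖x_n − c‖ exists). Then (x_n) is bounded, and (x_n) converges weakly to a point of C if and only if every weak sequential cluster point of (x_n) lies in C. -/
/-!
Boundedness comes from the convergence of `‖x n - c‖` for a single `c ∈ C`. A bounded sequence
has weakly convergent subsequences: apply sequential Banach–Alaoglu in the separable closed span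
of the sequence, identified with its dual by the Riesz map. The Opial property enters through the
identity `2 ⟪q - p, v⟫ = ‖v - p‖² - ‖v - q‖² + ‖q‖² - ‖p‖²`: if `p, q ∈ C`, then `⟪q - p, x n⟫`
converges, so weak cluster points `p` and `q` satisfy `⟪q - p, p⟫ = ⟪q - p, q⟫`, i.e. `p = q`.
A bounded sequence all of whose weak cluster points coincide converges weakly.
-/

open Filter
open scoped RealInnerProductSpace NNReal

open Topology Set Bornology

section
variable {X : Type*} [NormedAddCommGroup X] [InnerProductSpace ℝ X]

def WeakTendsto {ι : Type*} (x : ι → X) (l : Filter ι) (p : X) : Prop :=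
  ∀ y : X, Tendsto (fun i => ⟪y, x i⟫) l (𝓝 ⟪y, p⟫)

theorem WeakTendsto.comp {ι κ : Type*} {x : ι → X} {l : Filter ι} {p : X}
    (h : WeakTendsto x l p) {φ : κ → ι} {l' : Filter κ} (hφ : Tendsto φ l' l) :
    WeakTendsto (x ∘ φ) l' p :=
  fun y => (h y).comp hφ

theorem WeakTendsto.unique {ι : Type*} {x : ι → X} {l : Filter ι} [l.NeBot] {p q : X}
    (hp : WeakTendsto x l p) (hq : WeakTendsto x l q) : p = q :=
  ext_inner_left ℝ fun y => tendsto_nhds_unique (hp y) (hq y)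

theorem isBounded_range_of_tendsto_norm_sub {E : Type*} [SeminormedAddCommGroup E]
    {x : ℕ → E} {c : E} {a : ℝ} (h : Tendsto (fun n => ‖x n - c‖) atTop (𝓝 a)) :
    IsBounded (range x) := by
  obtain ⟨R, hR⟩ := h.bddAbove_range
  refine (Metric.isBounded_iff_subset_closedBall c).2 ⟨R, range_subset_iff.2 fun n => ?_⟩
  rw [Metric.mem_closedBall, dist_eq_norm]
  exact hR (mem_range_self n)

theorem exists_subseq_weakTendsto [CompleteSpace X] {x : ℕ → X} (hx : IsBounded (range x)) :
    ∃ (p : X) (φ : ℕ → ℕ), StrictMono φ ∧ WeakTendsto (x ∘ φ) atTop p := by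
  obtain ⟨M, hM⟩ := isBounded_iff_forall_norm_le.1 hx
  set Y := (Submodule.span ℝ (range x)).topologicalClosure
  have hxY : ∀ n, x n ∈ Y := fun n =>
    Submodule.le_topologicalClosure _ (Submodule.subset_span (mem_range_self n))
  have : TopologicalSpace.SeparableSpace Y :=
    (countable_range x).isSeparable.span.closure.separableSpace
  let f : ℕ → WeakDual ℝ Y := fun n =>
    StrongDual.toWeakDual (InnerProductSpace.toDual ℝ Y ⟨x n, hxY n⟩)
  have hf (n : ℕ) : ‖WeakDual.toStrongDual (f n)‖ ≤ M :=
    ((InnerProductSpace.toDual ℝ Y).norm_map _).trans_le (hM _ (mem_range_self n))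
  obtain ⟨ℓ, -, φ, hφ, hℓ⟩ :=
    WeakDual.isSeqCompact_closedBall ℝ Y 0 M fun n => mem_closedBall_zero_iff.2 (hf n)
  set p : Y := (InnerProductSpace.toDual ℝ Y).symm (WeakDual.toStrongDual ℓ)
  refine ⟨p, φ, hφ, fun y => ?_⟩
  have hz (v : Y) : InnerProductSpace.toDual ℝ Y v (Y.orthogonalProjectionOnto y) = ⟪y, v⟫ := by
    rw [InnerProductSpace.toDual_apply_apply,
      Submodule.inner_orthogonalProjectionOnto_eq_of_mem_left, real_inner_comm]
  have hp : ℓ (Y.orthogonalProjectionOnto y) = ⟪y, (p : X)⟫ := by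
    rw [← hz, LinearIsometryEquiv.apply_symm_apply]; rfl
  have hfz (n : ℕ) : f n (Y.orthogonalProjectionOnto y) = ⟪y, x n⟫ := hz ⟨x n, hxY n⟩
  simpa only [Function.comp_def, hfz, hp] using
    ((WeakDual.eval_continuous (Y.orthogonalProjectionOnto y)).tendsto ℓ).comp hℓ

theorem weakTendsto_of_forall_subseq_weakTendsto_eq [CompleteSpace X] {x : ℕ → X}
    (hx : IsBounded (range x)) {p : X}
    (h : ∀ (q : X) (φ : ℕ → ℕ), StrictMono φ → WeakTendsto (x ∘ φ) atTop q → q = p) :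
    WeakTendsto x atTop p := by
  intro y
  refine tendsto_of_subseq_tendsto fun ns hns => ?_
  obtain ⟨ψ, -, hnsψ⟩ := strictMono_subseq_of_tendsto_atTop hns
  obtain ⟨q, χ, hχ, hq⟩ :=
    exists_subseq_weakTendsto (hx.subset (range_comp_subset_range (ns ∘ ψ) x))
  obtain rfl := h q _ (hnsψ.comp hχ) hq
  exact ⟨ψ ∘ χ, hq y⟩

theorem tendsto_inner_sub_of_tendsto_norm_sub {ι : Type*} {x : ι → X} {l : Filter ι}
    {p q : X} {a b : ℝ} (hp : Tendsto (fun i => ‖x i - p‖) l (𝓝 a))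
    (hq : Tendsto (fun i => ‖x i - q‖) l (𝓝 b)) :
    Tendsto (fun i => ⟪q - p, x i⟫) l (𝓝 ((a ^ 2 - b ^ 2 + ‖q‖ ^ 2 - ‖p‖ ^ 2) / 2)) := by
  have key (v : X) : ⟪q - p, v⟫ = (‖v - p‖ ^ 2 - ‖v - q‖ ^ 2 + ‖q‖ ^ 2 - ‖p‖ ^ 2) / 2 := by
    rw [norm_sub_sq_real, norm_sub_sq_real, inner_sub_left, real_inner_comm v p,
      real_inner_comm v q]
    ring
  simp only [key]
  exact ((((hp.pow 2).sub (hq.pow 2)).add_const _).sub_const _).div_const 2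

theorem eq_of_weakTendsto_of_tendsto_norm_sub {x : ℕ → X} {p q : X}
    (hp : ∃ a, Tendsto (fun n => ‖x n - p‖) atTop (𝓝 a))
    (hq : ∃ b, Tendsto (fun n => ‖x n - q‖) atTop (𝓝 b))
    {φ ψ : ℕ → ℕ} (hφ : Tendsto φ atTop atTop) (hψ : Tendsto ψ atTop atTop)
    (hxp : WeakTendsto (x ∘ φ) atTop p) (hxq : WeakTendsto (x ∘ ψ) atTop q) : p = q := by
  obtain ⟨a, ha⟩ := hp
  obtain ⟨b, hb⟩ := hq
  have hlim := tendsto_inner_sub_of_tendsto_norm_sub ha hb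
  have hpq : ⟪q - p, p⟫ = ⟪q - p, q⟫ :=
    (tendsto_nhds_unique (hxp (q - p)) (hlim.comp hφ)).trans
      (tendsto_nhds_unique (hlim.comp hψ) (hxq (q - p)))
  rw [eq_comm, ← sub_eq_zero, ← inner_sub_right, inner_self_eq_zero, sub_eq_zero] at hpq
  exact hpq.symm

end

theorem opial_bounded_and_weak_convergence
    {X : Type*} [NormedAddCommGroup X] [InnerProductSpace ℝ X] [CompleteSpace X]
    (C : Set X) (hC : C.Nonempty) (x : ℕ → X)
    (hOpial : ∀ c ∈ C, ∃ l : ℝ, Tendsto (fun n => ‖x n - c‖) atTop (nhds l)) :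
    Bornology.IsBounded (Set.range x) ∧
    ((∃ p ∈ C, ∀ y : X, Tendsto (fun n => ⟪y, x n⟫) atTop (nhds ⟪y, p⟫)) ↔
      (∀ p : X, (∃ φ : ℕ → ℕ, StrictMono φ ∧
        ∀ y : X, Tendsto (fun n => ⟪y, x (φ n)⟫) atTop (nhds ⟪y, p⟫)) → p ∈ C)) := by
  obtain ⟨c, hc⟩ := hC
  obtain ⟨a, ha⟩ := hOpial c hc
  have hbdd : IsBounded (range x) := isBounded_range_of_tendsto_norm_sub ha
  refine ⟨hbdd, ⟨?_, fun H => ?_⟩⟩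
  · rintro ⟨p, hpC, hp⟩ q ⟨φ, hφ, hq⟩
    have hxp : WeakTendsto x atTop p := hp
    rwa [WeakTendsto.unique (x := x ∘ φ) hq (hxp.comp hφ.tendsto_atTop)]
  · obtain ⟨p, φ, hφ, hp⟩ := exists_subseq_weakTendsto hbdd
    have hpC : p ∈ C := H p ⟨φ, hφ, hp⟩
    refine ⟨p, hpC, weakTendsto_of_forall_subseq_weakTendsto_eq hbdd fun q ψ hψ hq => ?_⟩
    exact eq_of_weakTendsto_of_tendsto_norm_sub (hOpial q (H q ⟨ψ, hψ, hq⟩)) (hOpial p hpC)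
      hψ.tendsto_atTop hφ.tendsto_atTop hq hp
end

section
/- Relocated fixed-point iteration is Opial: Let Γ ⊆ (0,∞), let (T_γ)_{γ∈Γ} be a family of nonexpansive operators on a real Hilbert space X with Fix T_γ ≠ ∅ for every γ, and let (Q_{δ←γ})_{γ,δ∈Γ} be fixed-point relocators for (T_γ) with Lipschitz constants L_{δ←γ} ≥ 1. Suppose γ_n → γ̄ in Γ and Σ_n (L_{γ_{n+1}←γ_n} − 1) < ∞. Define x_{n+1} := Q_{γ_{n+1}←γ_n} T_{γ_n} x_n starting from x_0 ∈ X. Then for every c ∈ Fix T_{γ̄}, the limit lim_n ‖x_n − c‖ exists; i.e., (x_n) is Opial with respect to Fix T_{γ̄}. -/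
open Filter
open scoped RealInnerProductSpace NNReal

open Topology

/-! Relocating `c` along the parameters, `c n := Q (γ n) γ̄ c` is a fixed point of `T (γ n)`, and the
semigroup law gives `c (n+1) = Q (γ (n+1)) (γ n) (c n)`, so that
`‖x (n+1) - c (n+1)‖ ≤ L (γ (n+1)) (γ n) * ‖x n - c n‖`. As `∑ (L - 1) < ∞`, the deterministic
Robbins–Siegmund lemma makes `‖x n - c n‖` converge, and `c n → Q γ̄ γ̄ c = c` by continuity of the
relocators, so `‖x n - c‖` has the same limit. -/

theorem exists_tendsto_of_le_one_add_mul {a ε : ℕ → ℝ} (ha : ∀ n, 0 ≤ a n)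
    (hε : ∀ n, 0 ≤ ε n) (hsum : Summable ε) (hrec : ∀ n, a (n + 1) ≤ (1 + ε n) * a n) :
    ∃ l, Tendsto a atTop (𝓝 l) := by
  set P : ℕ → ℝ := fun n => ∏ k ∈ Finset.range n, (1 + ε k) with hP
  have hP_pos : ∀ n, 0 < P n := fun n =>
    Finset.prod_pos fun k _ => by linarith [hε k]
  have hP_succ : ∀ n, P (n + 1) = (1 + ε n) * P n := fun n => by
    simp only [hP, Finset.prod_range_succ, mul_comm]
  have hP_lim : Tendsto P atTop (𝓝 (∏' k, (1 + ε k))) :=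
    (Real.multipliable_one_add_of_summable hsum).tendsto_prod_tprod_nat
  -- `a n / P n` is antitone and nonnegative, hence convergent, and `P n` converges.
  have hb_anti : Antitone fun n => a n / P n := antitone_nat_of_succ_le fun n => by
    have hε_pos : 0 < 1 + ε n := by linarith [hε n]
    calc a (n + 1) / P (n + 1) ≤ (1 + ε n) * a n / ((1 + ε n) * P n) := by
          rw [hP_succ]; exact div_le_div_of_nonneg_right (hrec n) (mul_pos hε_pos (hP_pos n)).le
      _ = a n / P n := mul_div_mul_left _ _ hε_pos.ne'
  have hb_lim := tendsto_atTop_ciInf hb_anti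
    ⟨0, by rintro _ ⟨n, rfl⟩; exact div_nonneg (ha n) (hP_pos n).le⟩
  refine ⟨_, (hb_lim.mul hP_lim).congr fun n => ?_⟩
  exact div_mul_cancel₀ _ (hP_pos n).ne'

theorem tendsto_norm_sub_of_tendsto_norm_sub {E : Type*} [SeminormedAddCommGroup E]
    {x y : ℕ → E} {c : E} {l : ℝ} (hxy : Tendsto (fun n => ‖x n - y n‖) atTop (𝓝 l))
    (hy : Tendsto y atTop (𝓝 c)) : Tendsto (fun n => ‖x n - c‖) atTop (𝓝 l) := by
  have hdiff : Tendsto (fun n => ‖x n - c‖ - ‖x n - y n‖) atTop (𝓝 0) := by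
    refine squeeze_zero_norm (fun n => ?_) (tendsto_iff_norm_sub_tendsto_zero.mp hy)
    simpa only [Real.norm_eq_abs, sub_sub_sub_cancel_left] using
      abs_norm_sub_norm_le (x n - c) (x n - y n)
  simpa using hxy.add hdiff

theorem norm_apply_apply_sub_le_of_isFixedPt {E : Type*} [SeminormedAddCommGroup E]
    {Q T : E → E} {K : ℝ} (hQ : ∀ u v, ‖Q u - Q v‖ ≤ K * ‖u - v‖) (hK : 0 ≤ K)
    (hT : ∀ u v, ‖T u - T v‖ ≤ ‖u - v‖) {c : E} (hc : T c = c) (x : E) :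
    ‖Q (T x) - Q c‖ ≤ K * ‖x - c‖ :=
  calc ‖Q (T x) - Q c‖ = ‖Q (T x) - Q (T c)‖ := by rw [hc]
    _ ≤ K * ‖T x - T c‖ := hQ _ _
    _ ≤ K * ‖x - c‖ := mul_le_mul_of_nonneg_left (hT x c) hK

theorem relocated_iteration_opial_general
    {X : Type*} [NormedAddCommGroup X]
    (Γ : Set ℝ)
    (T : ℝ → X → X)
    (Q : ℝ → ℝ → X → X) (L : ℝ → ℝ → ℝ)
    (hbij : ∀ γ ∈ Γ, ∀ δ ∈ Γ,
      Set.BijOn (Q δ γ) {x : X | T γ x = x} {x : X | T δ x = x})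
    (hcontQ : ∀ γ ∈ Γ, ∀ x : X, T γ x = x → ContinuousOn (fun δ => Q δ γ x) Γ)
    (hsemi : ∀ γ ∈ Γ, ∀ δ ∈ Γ, ∀ ε ∈ Γ, ∀ x : X, T γ x = x →
      Q ε δ (Q δ γ x) = Q ε γ x)
    (hLone : ∀ γ ∈ Γ, ∀ δ ∈ Γ, 1 ≤ L δ γ)
    (hLip : ∀ γ ∈ Γ, ∀ δ ∈ Γ, ∀ x y : X, ‖Q δ γ x - Q δ γ y‖ ≤ L δ γ * ‖x - y‖)
    (γseq : ℕ → ℝ) (hγΓ : ∀ n, γseq n ∈ Γ)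
    (γbar : ℝ) (hγbar : γbar ∈ Γ)
    (hγconv : Tendsto γseq atTop (nhds γbar))
    (hLsum : Summable (fun n => L (γseq (n + 1)) (γseq n) - 1))
    (x : ℕ → X)
    (hxrec : ∀ n, x (n + 1) = Q (γseq (n + 1)) (γseq n) (T (γseq n) (x n)))
    (hnonexp : ∀ γ ∈ Γ, ∀ u v : X, ‖T γ u - T γ v‖ ≤ ‖u - v‖) :
    ∀ c : X, T γbar c = c →
      ∃ l : ℝ, Tendsto (fun n => ‖x n - c‖) atTop (nhds l) := by
  intro c hc
  have hL : ∀ n, 1 ≤ L (γseq (n + 1)) (γseq n) := fun n => hLone _ (hγΓ n) _ (hγΓ (n + 1))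
  have hstep : ∀ n, ‖x (n + 1) - Q (γseq (n + 1)) γbar c‖
      ≤ (1 + (L (γseq (n + 1)) (γseq n) - 1)) * ‖x n - Q (γseq n) γbar c‖ := fun n => by
    rw [add_sub_cancel, hxrec, ← hsemi γbar hγbar _ (hγΓ n) _ (hγΓ (n + 1)) c hc]
    exact norm_apply_apply_sub_le_of_isFixedPt (hLip _ (hγΓ n) _ (hγΓ (n + 1)))
      (by linarith [hL n]) (hnonexp _ (hγΓ n)) ((hbij γbar hγbar _ (hγΓ n)).mapsTo hc) (x n)
  obtain ⟨l, hl⟩ := exists_tendsto_of_le_one_add_mul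
    (a := fun n => ‖x n - Q (γseq n) γbar c‖) (fun _ => norm_nonneg _)
    (fun n => sub_nonneg.mpr (hL n)) hLsum hstep
  -- `Q γbar γbar` is idempotent and injective on `Fix T γbar`.
  have hQ_self : Q γbar γbar c = c := (hbij γbar hγbar γbar hγbar).injOn
    ((hbij γbar hγbar γbar hγbar).mapsTo hc) hc (hsemi γbar hγbar γbar hγbar γbar hγbar c hc)
  have hcs : Tendsto (fun n => Q (γseq n) γbar c) atTop (𝓝 c) := by
    simpa only [hQ_self, Function.comp_def] using
      (hcontQ γbar hγbar c hc γbar hγbar).tendsto.comp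
        (tendsto_nhdsWithin_iff.mpr ⟨hγconv, .of_forall hγΓ⟩)
  exact ⟨l, tendsto_norm_sub_of_tendsto_norm_sub hl hcs⟩

theorem relocated_iteration_opial
    {X : Type*} [NormedAddCommGroup X] [InnerProductSpace ℝ X] [CompleteSpace X]
    (Γ : Set ℝ) (hΓ : Γ ⊆ Set.Ioi (0:ℝ))
    (T : ℝ → X → X)
    (hfix : ∀ γ ∈ Γ, ∃ x : X, T γ x = x)
    (Q : ℝ → ℝ → X → X) (L : ℝ → ℝ → ℝ)
    (hbij : ∀ γ ∈ Γ, ∀ δ ∈ Γ,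
      Set.BijOn (Q δ γ) {x : X | T γ x = x} {x : X | T δ x = x})
    (hcontQ : ∀ γ ∈ Γ, ∀ x : X, T γ x = x → ContinuousOn (fun δ => Q δ γ x) Γ)
    (hsemi : ∀ γ ∈ Γ, ∀ δ ∈ Γ, ∀ ε ∈ Γ, ∀ x : X, T γ x = x →
      Q ε δ (Q δ γ x) = Q ε γ x)
    (hLone : ∀ γ ∈ Γ, ∀ δ ∈ Γ, 1 ≤ L δ γ)
    (hLip : ∀ γ ∈ Γ, ∀ δ ∈ Γ, ∀ x y : X, ‖Q δ γ x - Q δ γ y‖ ≤ L δ γ * ‖x - y‖)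
    (γseq : ℕ → ℝ) (hγΓ : ∀ n, γseq n ∈ Γ)
    (γbar : ℝ) (hγbar : γbar ∈ Γ)
    (hγconv : Tendsto γseq atTop (nhds γbar))
    (hLsum : Summable (fun n => L (γseq (n + 1)) (γseq n) - 1))
    (x : ℕ → X)
    (hxrec : ∀ n, x (n + 1) = Q (γseq (n + 1)) (γseq n) (T (γseq n) (x n)))
    (hnonexp : ∀ γ ∈ Γ, ∀ u v : X, ‖T γ u - T γ v‖ ≤ ‖u - v‖) :
    ∀ c : X, T γbar c = c →
      ∃ l : ℝ, Tendsto (fun n => ‖x n - c‖) atTop (nhds l) :=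
  relocated_iteration_opial_general Γ T Q L hbij hcontQ hsemi hLone hLip γseq hγΓ γbar hγbar hγconv
    hLsum x hxrec hnonexp
end

section
/- Asymptotic regularity of relocated fixed-point iterations: In the setting of the relocated fixed-point iteration x_{n+1} := Q_{γ_{n+1}←γ_n} T_{γ_n} x_n, suppose in addition there exists α ∈ (0,1) such that each T_γ is α-averaged. Then Σ_n ‖T_{γ_n}x_n − x_n‖² < ∞; in particular x_n − T_{γ_n}x_n → 0 strongly. -/
open Filter
open scoped RealInnerProductSpace NNReal

/-!
Relocating the fixed point `p₀` of `T_{γ₀}` along the iteration gives fixed points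
`pₙ ∈ Fix T_{γₙ}` with `p_{n+1} = Q_{γ_{n+1}←γₙ} pₙ`. Averagedness at `pₙ` and the Lipschitz
bound of the relocator give the quasi-Fejér inequality
`‖x_{n+1} - p_{n+1}‖² + ((1-α)/α) ‖T_{γₙ} xₙ - xₙ‖² ≤ L²_{γ_{n+1}←γₙ} ‖xₙ - pₙ‖²`,
and `∑ (L² - 1) < ∞`. A deterministic Robbins–Siegmund argument then bounds `‖xₙ - pₙ‖²` and
makes the residuals square-summable.
-/

open Finset

theorem Summable.sq_of_nonneg {ι : Type*} {f : ι → ℝ} (hf : Summable f)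
    (h0 : ∀ n, 0 ≤ f n) :
    Summable fun n => f n ^ 2 :=
  (hf.mul_left (∑' m, f m)).of_nonneg_of_le (fun n => sq_nonneg _) fun n => by
    rw [sq]
    exact mul_le_mul_of_nonneg_right (hf.le_tsum n fun m _ => h0 m) (h0 n)

theorem summable_sq_sub_one_of_summable_sub_one {ι : Type*} {L : ι → ℝ} (hL : ∀ n, 1 ≤ L n)
    (hs : Summable fun n => L n - 1) : Summable fun n => L n ^ 2 - 1 := by
  have h0 : ∀ n, 0 ≤ L n - 1 := fun n => sub_nonneg.mpr (hL n)
  refine ((hs.sq_of_nonneg h0).add (hs.mul_left 2)).congr fun n => ?_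
  ring

section QuasiFejer

variable {d r ε : ℕ → ℝ}

theorem le_mul_exp_sum_of_le_one_add_mul (hd : ∀ n, 0 ≤ d n)
    (h : ∀ n, d (n + 1) ≤ (1 + ε n) * d n) (n : ℕ) :
    d n ≤ d 0 * Real.exp (∑ k ∈ range n, ε k) := by
  induction n with
  | zero => simp
  | succ n ih =>
    calc d (n + 1) ≤ (1 + ε n) * d n := h n
      _ ≤ Real.exp (ε n) * d n := by
        gcongr
        · exact hd n
        · linarith [Real.add_one_le_exp (ε n)]
      _ ≤ Real.exp (ε n) * (d 0 * Real.exp (∑ k ∈ range n, ε k)) := by gcongr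
      _ = d 0 * Real.exp (∑ k ∈ range (n + 1), ε k) := by
        rw [sum_range_succ, Real.exp_add]; ring

theorem le_mul_exp_tsum_of_le_one_add_mul (hd : ∀ n, 0 ≤ d n) (hε : ∀ n, 0 ≤ ε n)
    (hεs : Summable ε) (h : ∀ n, d (n + 1) ≤ (1 + ε n) * d n) (n : ℕ) :
    d n ≤ d 0 * Real.exp (∑' k, ε k) :=
  (le_mul_exp_sum_of_le_one_add_mul hd h n).trans <| by
    gcongr
    · exact hd 0
    · exact hεs.sum_le_tsum _ fun k _ => hε k

/-- Deterministic Robbins–Siegmund lemma. -/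
theorem summable_of_add_le_one_add_mul (hd : ∀ n, 0 ≤ d n) (hr : ∀ n, 0 ≤ r n)
    (hε : ∀ n, 0 ≤ ε n) (hεs : Summable ε) (h : ∀ n, d (n + 1) + r n ≤ (1 + ε n) * d n) :
    Summable r := by
  set D := d 0 * Real.exp (∑' k, ε k)
  have hD : ∀ n, d n ≤ D :=
    le_mul_exp_tsum_of_le_one_add_mul hd hε hεs fun n => by linarith [h n, hr n]
  have hstep : ∀ n, r n ≤ (d n - d (n + 1)) + ε n * D := fun n => by
    nlinarith [h n, mul_le_mul_of_nonneg_left (hD n) (hε n)]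
  refine summable_of_sum_range_le (c := d 0 + (∑' k, ε k) * D) hr fun N => ?_
  calc ∑ n ∈ range N, r n ≤ ∑ n ∈ range N, ((d n - d (n + 1)) + ε n * D) :=
        sum_le_sum fun n _ => hstep n
    _ = (d 0 - d N) + (∑ n ∈ range N, ε n) * D := by
        rw [sum_add_distrib, sum_range_sub' d, ← sum_mul]
    _ ≤ d 0 + (∑' k, ε k) * D := by
        have hDnn : 0 ≤ D := (hd 0).trans (hD 0)
        have := mul_le_mul_of_nonneg_right (hεs.sum_le_tsum (range N) fun k _ => hε k) hDnn
        linarith [hd N]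

end QuasiFejer

section Relocation

variable {X : Type*}

theorem norm_relocate_averaged_sq_add_le [NormedAddCommGroup X] {T Q : X → X} {L c : ℝ}
    (hL : 1 ≤ L) (hc : 0 ≤ c)
    (hQ : ∀ u v, ‖Q u - Q v‖ ≤ L * ‖u - v‖)
    (hT : ∀ u v, ‖T u - T v‖ ^ 2 + c * ‖(u - T u) - (v - T v)‖ ^ 2 ≤ ‖u - v‖ ^ 2)
    (x p : X) (hp : T p = p) :
    ‖Q (T x) - Q p‖ ^ 2 + c * ‖T x - x‖ ^ 2 ≤ L ^ 2 * ‖x - p‖ ^ 2 := by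
  have hTx : ‖T x - p‖ ^ 2 + c * ‖T x - x‖ ^ 2 ≤ ‖x - p‖ ^ 2 := by
    simpa [hp, norm_sub_rev x (T x)] using hT x p
  have hQ2 : ‖Q (T x) - Q p‖ ^ 2 ≤ L ^ 2 * ‖T x - p‖ ^ 2 := by
    rw [← mul_pow]
    exact pow_le_pow_left₀ (norm_nonneg _) (hQ _ _) 2
  have hL2 : 1 ≤ L ^ 2 := one_le_pow₀ hL
  nlinarith [mul_nonneg hc (sq_nonneg ‖T x - x‖)]

def relocatedSeq (Q : ℝ → ℝ → X → X) (γ : ℕ → ℝ) (p₀ : X) : ℕ → X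
  | 0 => p₀
  | n + 1 => Q (γ (n + 1)) (γ n) (relocatedSeq Q γ p₀ n)

theorem relocatedSeq_isFixedPt {T : ℝ → X → X} {Q : ℝ → ℝ → X → X} {γ : ℕ → ℝ} {p₀ : X}
    (hp₀ : T (γ 0) p₀ = p₀)
    (hQ : ∀ n, Set.MapsTo (Q (γ (n + 1)) (γ n)) {x | T (γ n) x = x} {x | T (γ (n + 1)) x = x})
    (n : ℕ) : T (γ n) (relocatedSeq Q γ p₀ n) = relocatedSeq Q γ p₀ n := by
  induction n with
  | zero => exact hp₀
  | succ n ih => exact hQ n ih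

end Relocation

theorem relocated_iteration_asymptotic_regularity_general
    {X : Type*} [NormedAddCommGroup X]
    (Γ : Set ℝ)
    (T : ℝ → X → X)
    (hfix : ∀ γ ∈ Γ, ∃ x : X, T γ x = x)
    (Q : ℝ → ℝ → X → X) (L : ℝ → ℝ → ℝ)
    (hbij : ∀ γ ∈ Γ, ∀ δ ∈ Γ,
      Set.BijOn (Q δ γ) {x : X | T γ x = x} {x : X | T δ x = x})
    (hLone : ∀ γ ∈ Γ, ∀ δ ∈ Γ, 1 ≤ L δ γ)
    (hLip : ∀ γ ∈ Γ, ∀ δ ∈ Γ, ∀ x y : X, ‖Q δ γ x - Q δ γ y‖ ≤ L δ γ * ‖x - y‖)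
    (γseq : ℕ → ℝ) (hγΓ : ∀ n, γseq n ∈ Γ)
    (hLsum : Summable (fun n => L (γseq (n + 1)) (γseq n) - 1))
    (x : ℕ → X)
    (hxrec : ∀ n, x (n + 1) = Q (γseq (n + 1)) (γseq n) (T (γseq n) (x n)))
    (α : ℝ) (hα0 : 0 < α) (hα1 : α < 1)
    (havg : ∀ γ ∈ Γ, ∀ u v : X,
      ‖T γ u - T γ v‖ ^ 2 + ((1 - α) / α) * ‖(u - T γ u) - (v - T γ v)‖ ^ 2
        ≤ ‖u - v‖ ^ 2) :
    Summable (fun n => ‖T (γseq n) (x n) - x n‖ ^ 2) ∧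
    Tendsto (fun n => x n - T (γseq n) (x n)) atTop (nhds 0) := by
  obtain ⟨p₀, hp₀⟩ := hfix (γseq 0) (hγΓ 0)
  set p := relocatedSeq Q γseq p₀
  have hp : ∀ n, T (γseq n) (p n) = p n :=
    relocatedSeq_isFixedPt hp₀ fun n => (hbij _ (hγΓ n) _ (hγΓ (n + 1))).mapsTo
  have hc : 0 < (1 - α) / α := div_pos (by linarith) hα0
  have hL : ∀ n, 1 ≤ L (γseq (n + 1)) (γseq n) := fun n => hLone _ (hγΓ n) _ (hγΓ (n + 1))
  have hfejer : ∀ n, ‖x (n + 1) - p (n + 1)‖ ^ 2 + (1 - α) / α * ‖T (γseq n) (x n) - x n‖ ^ 2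
      ≤ (1 + (L (γseq (n + 1)) (γseq n) ^ 2 - 1)) * ‖x n - p n‖ ^ 2 := fun n => by
    rw [add_sub_cancel, hxrec n]
    exact norm_relocate_averaged_sq_add_le (hL n) hc.le (hLip _ (hγΓ n) _ (hγΓ (n + 1)))
      (havg _ (hγΓ n)) (x n) (p n) (hp n)
  have hsum : Summable fun n => ‖T (γseq n) (x n) - x n‖ ^ 2 :=
    (summable_mul_left_iff hc.ne').mp <|
      summable_of_add_le_one_add_mul (d := fun n => ‖x n - p n‖ ^ 2) (fun n => sq_nonneg _)
        (fun n => by positivity) (fun n => by nlinarith [hL n])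
        (summable_sq_sub_one_of_summable_sub_one hL hLsum) hfejer
  refine ⟨hsum, tendsto_zero_iff_norm_tendsto_zero.mpr ?_⟩
  simpa [Real.sqrt_sq, norm_sub_rev] using hsum.tendsto_atTop_zero.sqrt

theorem relocated_iteration_asymptotic_regularity
    {X : Type*} [NormedAddCommGroup X] [InnerProductSpace ℝ X] [CompleteSpace X]
    (Γ : Set ℝ) (hΓ : Γ ⊆ Set.Ioi (0:ℝ))
    (T : ℝ → X → X)
    (hfix : ∀ γ ∈ Γ, ∃ x : X, T γ x = x)
    (Q : ℝ → ℝ → X → X) (L : ℝ → ℝ → ℝ)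
    (hbij : ∀ γ ∈ Γ, ∀ δ ∈ Γ,
      Set.BijOn (Q δ γ) {x : X | T γ x = x} {x : X | T δ x = x})
    (hcontQ : ∀ γ ∈ Γ, ∀ x : X, T γ x = x → ContinuousOn (fun δ => Q δ γ x) Γ)
    (hsemi : ∀ γ ∈ Γ, ∀ δ ∈ Γ, ∀ ε ∈ Γ, ∀ x : X, T γ x = x →
      Q ε δ (Q δ γ x) = Q ε γ x)
    (hLone : ∀ γ ∈ Γ, ∀ δ ∈ Γ, 1 ≤ L δ γ)
    (hLip : ∀ γ ∈ Γ, ∀ δ ∈ Γ, ∀ x y : X, ‖Q δ γ x - Q δ γ y‖ ≤ L δ γ * ‖x - y‖)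
    (γseq : ℕ → ℝ) (hγΓ : ∀ n, γseq n ∈ Γ)
    (γbar : ℝ) (hγbar : γbar ∈ Γ)
    (hγconv : Tendsto γseq atTop (nhds γbar))
    (hLsum : Summable (fun n => L (γseq (n + 1)) (γseq n) - 1))
    (x : ℕ → X)
    (hxrec : ∀ n, x (n + 1) = Q (γseq (n + 1)) (γseq n) (T (γseq n) (x n)))
    (α : ℝ) (hα0 : 0 < α) (hα1 : α < 1)
    (havg : ∀ γ ∈ Γ, ∀ u v : X,
      ‖T γ u - T γ v‖ ^ 2 + ((1 - α) / α) * ‖(u - T γ u) - (v - T γ v)‖ ^ 2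
        ≤ ‖u - v‖ ^ 2) :
    Summable (fun n => ‖T (γseq n) (x n) - x n‖ ^ 2) ∧
    Tendsto (fun n => x n - T (γseq n) (x n)) atTop (nhds 0) :=
  relocated_iteration_asymptotic_regularity_general Γ T hfix Q L hbij hLone hLip γseq hγΓ hLsum x
    hxrec α hα0 hα1 havg
end

section
/- Weak convergence of relocated fixed-point iterations: In the setting of the relocated fixed-point iteration x_{n+1} := Q_{γ_{n+1}←γ_n} T_{γ_n} x_n with each T_γ α-averaged (for a common α ∈ (0,1)), Fix T_γ ≠ ∅ for all γ ∈ Γ, and (x, γ) ↦ T_γ x jointly norm-continuous, the sequences (x_n) and (T_{γ_n} x_n) both converge weakly to the same point in Fix T_{γ̄}. -/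
open Filter
open scoped RealInnerProductSpace NNReal

/-!
For each `p ∈ Fix T_γ̄` the relocated anchors `p_n := Q_{γ_n←γ̄} p` are fixed points of `T_{γ_n}`,
are moved by the same relocators as the iterates, and converge to `p`. Averagedness and the
Lipschitz bounds give `‖x_{n+1} - p_{n+1}‖² ≤ L_n² (‖x_n - p_n‖² - (1-α)/α ‖x_n - T_{γ_n} x_n‖²)`;
as `∏ L_n²` converges, this quasi-Fejér inequality yields asymptotic regularity and the convergence
of `‖x_n - p‖`. Bounded sequences have weak cluster points (Banach–Alaoglu along ultrafilters),
these are fixed points of `T_γ̄` by demiclosedness, and Opial's argument shows there is only one.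
-/

open Function Topology

section NormSub

variable {E : Type*} [SeminormedAddCommGroup E] {ι : Type*} {l : Filter ι}

theorem isBoundedUnder_norm_of_tendsto_norm_sub {x : ι → E} {p : E} {r : ℝ}
    (h : Tendsto (fun n => ‖x n - p‖) l (𝓝 r)) : IsBoundedUnder (· ≤ ·) l fun n => ‖x n‖ := by
  obtain ⟨R, hR⟩ := h.isBoundedUnder_le
  refine ⟨R + ‖p‖, eventually_map.2 ?_⟩
  filter_upwards [eventually_map.1 hR] with n hn
  linarith [norm_le_insert' (x n) p]

theorem tendsto_norm_sub_const_of_tendsto_norm_sub {x p : ι → E} {p₀ : E} {r : ℝ}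
    (hx : Tendsto (fun n => ‖x n - p n‖) l (𝓝 r)) (hp : Tendsto p l (𝓝 p₀)) :
    Tendsto (fun n => ‖x n - p₀‖) l (𝓝 r) := by
  refine tendsto_of_tendsto_of_dist hx
    (squeeze_zero (fun _ => dist_nonneg) (fun n => ?_) (tendsto_iff_norm_sub_tendsto_zero.1 hp))
  rw [Real.dist_eq]
  refine (abs_norm_sub_norm_le _ _).trans_eq ?_
  rw [sub_sub_sub_cancel_left, norm_sub_rev]

end NormSub

section WeakConvergence

variable {X : Type*} [NormedAddCommGroup X] [InnerProductSpace ℝ X] {ι : Type*} {l : Filter ι}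

def TendstoWeakly (x : ι → X) (l : Filter ι) (p : X) : Prop :=
  ∀ y, Tendsto (fun n => ⟪y, x n⟫) l (𝓝 ⟪y, p⟫)

theorem TendstoWeakly.of_tendsto_norm_sub {x z : ι → X} {p : X} (h : TendstoWeakly x l p)
    (hxz : Tendsto (fun n => ‖x n - z n‖) l (𝓝 0)) : TendstoWeakly z l p := by
  intro y
  have hsmall : Tendsto (fun n => ⟪y, z n - x n⟫) l (𝓝 0) := by
    refine squeeze_zero_norm (fun n => ?_) (by simpa using hxz.const_mul ‖y‖)
    rw [Real.norm_eq_abs, norm_sub_rev]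
    exact abs_real_inner_le_norm _ _
  simpa [inner_sub_right] using (h y).add hsmall

/-- Banach–Alaoglu, transported to `X` by the Riesz representation. -/
theorem exists_tendstoWeakly_of_isBoundedUnder [CompleteSpace X] {x : ι → X} {𝒰 : Ultrafilter ι}
    (hx : IsBoundedUnder (· ≤ ·) 𝒰 fun n => ‖x n‖) : ∃ p, TendstoWeakly x 𝒰 p := by
  obtain ⟨R, hR⟩ := hx
  let f : ι → WeakDual ℝ X := fun n => StrongDual.toWeakDual (InnerProductSpace.toDual ℝ X (x n))
  have hball : ∀ᶠ n in 𝒰, f n ∈ WeakDual.toStrongDual ⁻¹' Metric.closedBall 0 R := by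
    filter_upwards [eventually_map.1 hR] with n hn
    simpa [f] using hn
  obtain ⟨φ, -, hφ⟩ := (WeakDual.isCompact_closedBall 0 R).ultrafilter_le_nhds (𝒰.map f)
    (le_principal_iff.2 hball)
  refine ⟨(InnerProductSpace.toDual ℝ X).symm (WeakDual.toStrongDual φ), fun y => ?_⟩
  rw [real_inner_comm, InnerProductSpace.toDual_symm_apply]
  simpa [comp_def, f, real_inner_comm y] using
    ((WeakDual.eval_continuous y).tendsto φ).comp hφ

theorem eq_of_tendstoWeakly_of_norm_sub_le [l.NeBot] {x : ι → X} {q u : X} {e : ι → ℝ}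
    (hx : TendstoWeakly x l q) (hbdd : IsBoundedUnder (· ≤ ·) l fun n => ‖x n‖)
    (he : Tendsto e l (𝓝 0)) (hle : ∀ᶠ n in l, ‖x n - u‖ ≤ ‖x n - q‖ + e n) : u = q := by
  obtain ⟨R, hR⟩ := hbdd
  have hgap : Tendsto (fun n => ‖x n - u‖ ^ 2 - ‖x n - q‖ ^ 2) l (𝓝 (‖u - q‖ ^ 2)) := by
    have hid : ∀ n, ‖x n - u‖ ^ 2 - ‖x n - q‖ ^ 2
        = ‖u - q‖ ^ 2 - 2 * (⟪u - q, x n⟫ - ⟪u - q, q⟫) := by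
      intro n
      rw [← sub_sub_sub_cancel_right (x n) u q, norm_sub_sq_real, real_inner_comm,
        inner_sub_right]
      ring
    have h0 : Tendsto (fun n => ⟪u - q, x n⟫ - ⟪u - q, q⟫) l (𝓝 0) := by
      simpa using (hx (u - q)).sub_const ⟪u - q, q⟫
    simp_rw [hid]
    simpa using (h0.const_mul 2).const_sub (‖u - q‖ ^ 2)
  set K := 2 * (R + ‖q‖) + 1
  have hsmall : Tendsto (fun n => |e n| * K) l (𝓝 0) := by simpa using he.abs.mul_const K
  have hupper : ∀ᶠ n in l, ‖x n - u‖ ^ 2 - ‖x n - q‖ ^ 2 ≤ |e n| * K := by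
    have he1 : ∀ᶠ n in l, |e n| ≤ 1 := he.abs.eventually_le_const (by norm_num : (|0| : ℝ) < 1)
    filter_upwards [hle, eventually_map.1 hR, he1] with n hn hRn he1n
    have hq : ‖x n - q‖ ≤ R + ‖q‖ := (norm_sub_le _ _).trans (by linarith)
    have hsq : ‖x n - u‖ ^ 2 ≤ (‖x n - q‖ + e n) ^ 2 := pow_le_pow_left₀ (norm_nonneg _) hn 2
    nlinarith [abs_nonneg (e n), le_abs_self (e n), neg_abs_le (e n), sq_abs (e n),
      norm_nonneg (x n - q)]
  have hle0 : ‖u - q‖ ^ 2 ≤ 0 := le_of_tendsto_of_tendsto hgap hsmall hupper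
  exact sub_eq_zero.1 (norm_eq_zero.1 (by nlinarith [norm_nonneg (u - q)]))

/-- The demiclosedness principle. -/
theorem isFixedPt_of_tendstoWeakly [l.NeBot] {S : ι → X → X} {S₀ : X → X}
    (hS : ∀ n, LipschitzWith 1 (S n)) {x : ι → X} {q : X} (hx : TendstoWeakly x l q)
    (hbdd : IsBoundedUnder (· ≤ ·) l fun n => ‖x n‖)
    (hreg : Tendsto (fun n => ‖x n - S n (x n)‖) l (𝓝 0))
    (hSq : Tendsto (fun n => S n q) l (𝓝 (S₀ q))) : IsFixedPt S₀ q := by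
  refine eq_of_tendstoWeakly_of_norm_sub_le (e := fun n => ‖x n - S n (x n)‖ + ‖S n q - S₀ q‖)
    hx hbdd (by simpa using hreg.add (tendsto_iff_norm_sub_tendsto_zero.1 hSq))
    (Eventually.of_forall fun n => ?_)
  have hlip : ‖S n (x n) - S n q‖ ≤ ‖x n - q‖ := by simpa using (hS n).norm_sub_le (x n) q
  linarith [norm_sub_le_norm_sub_add_norm_sub (x n) (S n (x n)) (S₀ q),
    norm_sub_le_norm_sub_add_norm_sub (S n (x n)) (S n q) (S₀ q)]

theorem tendsto_inner_sub_of_tendsto_norm_sub_s17 {x : ι → X} {p p' : X} {r r' : ℝ}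
    (h : Tendsto (fun n => ‖x n - p‖) l (𝓝 r)) (h' : Tendsto (fun n => ‖x n - p'‖) l (𝓝 r')) :
    Tendsto (fun n => ⟪p - p', x n⟫) l (𝓝 ((r' ^ 2 - r ^ 2 + ‖p‖ ^ 2 - ‖p'‖ ^ 2) / 2)) := by
  have hid : ∀ n, ⟪p - p', x n⟫ = (‖x n - p'‖ ^ 2 - ‖x n - p‖ ^ 2 + ‖p‖ ^ 2 - ‖p'‖ ^ 2) / 2 := by
    intro n
    rw [norm_sub_sq_real, norm_sub_sq_real, inner_sub_left, real_inner_comm p,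
      real_inner_comm p']
    ring
  simp_rw [hid]
  exact ((((h'.pow 2).sub (h.pow 2)).add_const _).sub_const _).div_const 2

theorem TendstoWeakly.eq_of_tendsto_norm_sub {x : ι → X} {l₁ l₂ : Filter ι} [l₁.NeBot]
    [l₂.NeBot] {q q' : X} (h₁ : TendstoWeakly x l₁ q) (h₂ : TendstoWeakly x l₂ q')
    (hl₁ : l₁ ≤ l) (hl₂ : l₂ ≤ l) (hq : ∃ r, Tendsto (fun n => ‖x n - q‖) l (𝓝 r))
    (hq' : ∃ r, Tendsto (fun n => ‖x n - q'‖) l (𝓝 r)) : q = q' := by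
  obtain ⟨r, hr⟩ := hq
  obtain ⟨r', hr'⟩ := hq'
  have hlim := tendsto_inner_sub_of_tendsto_norm_sub_s17 hr hr'
  have e₁ := tendsto_nhds_unique (h₁ (q - q')) (hlim.mono_left hl₁)
  have e₂ := tendsto_nhds_unique (h₂ (q - q')) (hlim.mono_left hl₂)
  have h0 : ⟪q - q', q - q'⟫ = 0 := by rw [inner_sub_right, e₁, e₂, sub_self]
  exact sub_eq_zero.1 (inner_self_eq_zero.1 h0)

/-- Opial's lemma. -/
theorem exists_tendstoWeakly_of_tendsto_norm_sub [CompleteSpace X] [l.NeBot] {x : ι → X}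
    {F : Set X} (hF : F.Nonempty) (hconv : ∀ p ∈ F, ∃ r, Tendsto (fun n => ‖x n - p‖) l (𝓝 r))
    (hcluster : ∀ 𝒰 : Ultrafilter ι, ↑𝒰 ≤ l → ∀ q, TendstoWeakly x 𝒰 q → q ∈ F) :
    ∃ p ∈ F, TendstoWeakly x l p := by
  obtain ⟨p₀, hp₀⟩ := hF
  obtain ⟨r₀, hr₀⟩ := hconv p₀ hp₀
  have hcl : ∀ 𝒰 : Ultrafilter ι, ↑𝒰 ≤ l → ∃ q ∈ F, TendstoWeakly x 𝒰 q := fun 𝒰 h𝒰 =>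
    let ⟨q, hq⟩ := exists_tendstoWeakly_of_isBoundedUnder
      ((isBoundedUnder_norm_of_tendsto_norm_sub hr₀).mono h𝒰)
    ⟨q, hcluster 𝒰 h𝒰 q hq, hq⟩
  obtain ⟨p, hpF, hp⟩ := hcl (Ultrafilter.of l) (Ultrafilter.of_le l)
  refine ⟨p, hpF, fun y => (tendsto_iff_ultrafilter _ _ _).2 fun 𝒱 h𝒱 => ?_⟩
  obtain ⟨q, hqF, hq⟩ := hcl 𝒱 h𝒱
  rw [hp.eq_of_tendsto_norm_sub hq (Ultrafilter.of_le l) h𝒱 (hconv p hpF) (hconv q hqF)]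
  exact hq y

end WeakConvergence

theorem summable_of_add_le {w v : ℕ → ℝ} (hw : ∀ n, 0 ≤ w n) (hv : ∀ n, 0 ≤ v n)
    (h : ∀ n, w (n + 1) + v n ≤ w n) : Summable v := by
  refine summable_of_sum_range_le hv (c := w 0) fun n => ?_
  have htele : ∑ k ∈ Finset.range n, v k ≤ w 0 - w n := by
    induction n with
    | zero => simp
    | succ n ih => rw [Finset.sum_range_succ]; linarith [h n]
  linarith [hw n]

/-- Quasi-Fejér monotonicity: dividing by the partial products of `m` turns the recursion
into a decreasing sequence. -/
theorem summable_and_exists_tendsto_of_le_mul_sub {u v m : ℕ → ℝ} (hu : ∀ n, 0 ≤ u n)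
    (hv : ∀ n, 0 ≤ v n) (hm : ∀ n, 1 ≤ m n) (hmul : Multipliable m)
    (hrec : ∀ n, u (n + 1) ≤ m n * (u n - v n)) : Summable v ∧ ∃ r, Tendsto u atTop (𝓝 r) := by
  set P : ℕ → ℝ := fun n => ∏ k ∈ Finset.range n, m k
  have hP1 : ∀ n, 1 ≤ P n := fun n => Finset.one_le_prod fun k _ => hm k
  have hPpos : ∀ n, 0 < P n := fun n => one_pos.trans_le (hP1 n)
  have hPsucc : ∀ n, P (n + 1) = P n * m n := fun n => Finset.prod_range_succ _ _
  have hPlim : Tendsto P atTop (𝓝 (∏' n, m n)) := hmul.hasProd.tendsto_prod_nat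
  have hPle : ∀ n, P n ≤ ∏' n, m n :=
    (monotone_nat_of_le_succ fun n => by
      rw [hPsucc]; exact le_mul_of_one_le_right (hPpos n).le (hm n)).ge_of_tendsto hPlim
  set M := ∏' n, m n
  have hM : 0 < M := (hPpos 0).trans_le (hPle 0)
  set w : ℕ → ℝ := fun n => u n / P n
  have hw : ∀ n, 0 ≤ w n := fun n => div_nonneg (hu n) (hPpos n).le
  have hstep : ∀ n, w (n + 1) + v n / M ≤ w n := by
    intro n
    have hmn : 0 < m n := one_pos.trans_le (hm n)
    have h1 : w (n + 1) ≤ (u n - v n) / P n := by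
      simp only [w, hPsucc]
      rw [div_le_div_iff₀ (mul_pos (hPpos n) hmn) (hPpos n)]
      nlinarith [hrec n, hPpos n]
    have h2 : v n / M ≤ v n / P n := div_le_div_of_nonneg_left (hv n) (hPpos n) (hPle n)
    rw [sub_div] at h1
    linarith
  have hsum := summable_of_add_le hw (fun n => div_nonneg (hv n) hM.le) hstep
  refine ⟨by simpa [div_mul_cancel₀ _ hM.ne'] using hsum.mul_right M, ?_⟩
  have hwlim : Tendsto w atTop (𝓝 (⨅ n, w n)) :=
    tendsto_atTop_ciInf (antitone_nat_of_succ_le fun n => by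
      linarith [hstep n, div_nonneg (hv n) hM.le]) ⟨0, by rintro _ ⟨n, rfl⟩; exact hw n⟩
  refine ⟨(⨅ n, w n) * M, (hwlim.mul hPlim).congr fun n => ?_⟩
  exact div_mul_cancel₀ _ (hPpos n).ne'

section Averaged

variable {X : Type*} [SeminormedAddCommGroup X]

/-- The standard characterization of `α`-averaged operators
(Bauschke–Combettes, Prop. 4.35). -/
def IsAveraged (α : ℝ) (S : X → X) : Prop :=
  ∀ u v, ‖S u - S v‖ ^ 2 + (1 - α) / α * ‖(u - S u) - (v - S v)‖ ^ 2 ≤ ‖u - v‖ ^ 2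

theorem IsAveraged.lipschitzWith_one {α : ℝ} {S : X → X} (hS : IsAveraged α S) (hα₀ : 0 ≤ α)
    (hα₁ : α ≤ 1) : LipschitzWith 1 S := by
  refine LipschitzWith.of_dist_le_mul fun u v => ?_
  rw [NNReal.coe_one, one_mul, dist_eq_norm, dist_eq_norm]
  have hc : 0 ≤ (1 - α) / α := div_nonneg (by linarith) hα₀
  refine (pow_le_pow_iff_left₀ (norm_nonneg _) (norm_nonneg _) two_ne_zero).1 ?_
  nlinarith [hS u v, mul_nonneg hc (sq_nonneg ‖(u - S u) - (v - S v)‖)]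

theorem IsAveraged.norm_sub_sq_le {α K : ℝ} {S R : X → X} (hS : IsAveraged α S)
    (hR : ∀ u v, ‖R u - R v‖ ≤ K * ‖u - v‖) {x p : X} (hp : IsFixedPt S p) :
    ‖R (S x) - R p‖ ^ 2 ≤ K ^ 2 * (‖x - p‖ ^ 2 - (1 - α) / α * ‖x - S x‖ ^ 2) := by
  have havg : ‖S x - p‖ ^ 2 + (1 - α) / α * ‖x - S x‖ ^ 2 ≤ ‖x - p‖ ^ 2 := by
    simpa [hp.eq] using hS x p
  calc ‖R (S x) - R p‖ ^ 2 ≤ (K * ‖S x - p‖) ^ 2 := pow_le_pow_left₀ (norm_nonneg _) (hR _ _) 2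
    _ = K ^ 2 * ‖S x - p‖ ^ 2 := mul_pow _ _ _
    _ ≤ K ^ 2 * (‖x - p‖ ^ 2 - (1 - α) / α * ‖x - S x‖ ^ 2) :=
      mul_le_mul_of_nonneg_left (by linarith) (sq_nonneg K)

theorem IsAveraged.tendsto_of_relocated_iteration {α : ℝ} {S R : ℕ → X → X} {K : ℕ → ℝ}
    {x p : ℕ → X} (hα₀ : 0 < α) (hα₁ : α < 1) (hS : ∀ n, IsAveraged α (S n)) (hK : ∀ n, 1 ≤ K n)
    (hKsum : Summable fun n => K n - 1) (hR : ∀ n u v, ‖R n u - R n v‖ ≤ K n * ‖u - v‖)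
    (hx : ∀ n, x (n + 1) = R n (S n (x n))) (hpfix : ∀ n, IsFixedPt (S n) (p n))
    (hp : ∀ n, p (n + 1) = R n (p n)) :
    Tendsto (fun n => ‖x n - S n (x n)‖) atTop (𝓝 0) ∧
      ∃ r, Tendsto (fun n => ‖x n - p n‖) atTop (𝓝 r) := by
  have hc : 0 < (1 - α) / α := div_pos (by linarith) hα₀
  have hKmul : Multipliable K := by simpa using Real.multipliable_one_add_of_summable hKsum
  obtain ⟨hsum, r, hr⟩ := summable_and_exists_tendsto_of_le_mul_sub
    (u := fun n => ‖x n - p n‖ ^ 2) (v := fun n => (1 - α) / α * ‖x n - S n (x n)‖ ^ 2)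
    (m := fun n => K n ^ 2) (fun n => sq_nonneg _) (fun n => by positivity)
    (fun n => one_le_pow₀ (hK n)) (by simpa [sq] using hKmul.mul hKmul)
    (fun n => by rw [hx n, hp n]; exact (hS n).norm_sub_sq_le (hR n) (hpfix n))
  have hsq : Tendsto (fun n => ‖x n - S n (x n)‖ ^ 2) atTop (𝓝 0) := by
    simpa [hc.ne'] using hsum.tendsto_atTop_zero.div_const ((1 - α) / α)
  constructor
  · simpa [Real.sqrt_sq (norm_nonneg _)] using hsq.sqrt
  · exact ⟨√r, by simpa [Real.sqrt_sq (norm_nonneg _)] using hr.sqrt⟩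

end Averaged

theorem relocated_iteration_weak_convergence_general
    {X : Type*} [NormedAddCommGroup X] [InnerProductSpace ℝ X] [CompleteSpace X]
    (Γ : Set ℝ)
    (T : ℝ → X → X)
    (hfix : ∀ γ ∈ Γ, ∃ x : X, T γ x = x)
    (Q : ℝ → ℝ → X → X) (L : ℝ → ℝ → ℝ)
    (hbij : ∀ γ ∈ Γ, ∀ δ ∈ Γ,
      Set.BijOn (Q δ γ) {x : X | T γ x = x} {x : X | T δ x = x})
    (hcontQ : ∀ γ ∈ Γ, ∀ x : X, T γ x = x → ContinuousOn (fun δ => Q δ γ x) Γ)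
    (hsemi : ∀ γ ∈ Γ, ∀ δ ∈ Γ, ∀ ε ∈ Γ, ∀ x : X, T γ x = x →
      Q ε δ (Q δ γ x) = Q ε γ x)
    (hLone : ∀ γ ∈ Γ, ∀ δ ∈ Γ, 1 ≤ L δ γ)
    (hLip : ∀ γ ∈ Γ, ∀ δ ∈ Γ, ∀ x y : X, ‖Q δ γ x - Q δ γ y‖ ≤ L δ γ * ‖x - y‖)
    (γseq : ℕ → ℝ) (hγΓ : ∀ n, γseq n ∈ Γ)
    (γbar : ℝ) (hγbar : γbar ∈ Γ)
    (hγconv : Tendsto γseq atTop (nhds γbar))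
    (hLsum : Summable (fun n => L (γseq (n + 1)) (γseq n) - 1))
    (x : ℕ → X)
    (hxrec : ∀ n, x (n + 1) = Q (γseq (n + 1)) (γseq n) (T (γseq n) (x n)))
    (α : ℝ) (hα0 : 0 < α) (hα1 : α < 1)
    (havg : ∀ γ ∈ Γ, ∀ u v : X,
      ‖T γ u - T γ v‖ ^ 2 + ((1 - α) / α) * ‖(u - T γ u) - (v - T γ v)‖ ^ 2
        ≤ ‖u - v‖ ^ 2)
    (hTcont : ContinuousOn (fun p : X × ℝ => T p.2 p.1) (Set.univ ×ˢ Γ)) :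
    ∃ p : X, T γbar p = p ∧
      (∀ y : X, Tendsto (fun n => ⟪y, x n⟫) atTop (nhds ⟪y, p⟫)) ∧
      (∀ y : X, Tendsto (fun n => ⟪y, T (γseq n) (x n)⟫) atTop (nhds ⟪y, p⟫)) := by
  have hγ : Tendsto γseq atTop (𝓝[Γ] γbar) :=
    tendsto_nhdsWithin_iff.2 ⟨hγconv, Eventually.of_forall hγΓ⟩
  have hfejer : ∀ p ∈ fixedPoints (T γbar),
      Tendsto (fun n => ‖x n - T (γseq n) (x n)‖) atTop (𝓝 0) ∧
        ∃ r, Tendsto (fun n => ‖x n - p‖) atTop (𝓝 r) := by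
    intro p hp
    have hbar := hbij γbar hγbar γbar hγbar
    have hQp : Q γbar γbar p = p :=
      hbar.injOn (hbar.mapsTo hp) hp (hsemi γbar hγbar γbar hγbar γbar hγbar p hp)
    have hanchor : Tendsto (fun n => Q (γseq n) γbar p) atTop (𝓝 p) := by
      simpa only [comp_def, hQp] using (hcontQ γbar hγbar p hp γbar hγbar).tendsto.comp hγ
    obtain ⟨hreg, r, hr⟩ := IsAveraged.tendsto_of_relocated_iteration hα0 hα1
      (fun n => havg _ (hγΓ n)) (fun n => hLone _ (hγΓ n) _ (hγΓ (n + 1))) hLsum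
      (fun n => hLip _ (hγΓ n) _ (hγΓ (n + 1))) hxrec
      (fun n => (hbij γbar hγbar _ (hγΓ n)).mapsTo hp)
      (fun n => (hsemi γbar hγbar _ (hγΓ n) _ (hγΓ (n + 1)) p hp).symm)
    exact ⟨hreg, r, tendsto_norm_sub_const_of_tendsto_norm_sub hr hanchor⟩
  obtain ⟨p₀, hp₀⟩ := hfix γbar hγbar
  obtain ⟨hreg, r₀, hr₀⟩ := hfejer p₀ hp₀
  have hTq : ∀ q, Tendsto (fun n => T (γseq n) q) atTop (𝓝 (T γbar q)) := fun q =>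
    (hTcont (q, γbar) ⟨trivial, hγbar⟩).tendsto.comp
      (tendsto_nhdsWithin_iff.2 ⟨tendsto_const_nhds.prodMk_nhds hγconv,
        Eventually.of_forall fun n => ⟨trivial, hγΓ n⟩⟩)
  have hnonexp : ∀ n, LipschitzWith 1 (T (γseq n)) := fun n =>
    IsAveraged.lipschitzWith_one (havg _ (hγΓ n)) hα0.le hα1.le
  have hbdd := isBoundedUnder_norm_of_tendsto_norm_sub hr₀
  obtain ⟨p, hp, hweak⟩ := exists_tendstoWeakly_of_tendsto_norm_sub
    (F := fixedPoints (T γbar)) ⟨p₀, hp₀⟩ (fun p hp => (hfejer p hp).2) fun 𝒰 h𝒰 q hq =>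
      isFixedPt_of_tendstoWeakly hnonexp hq (hbdd.mono h𝒰) (hreg.mono_left h𝒰)
        ((hTq q).mono_left h𝒰)
  exact ⟨p, hp, hweak, hweak.of_tendsto_norm_sub hreg⟩

theorem relocated_iteration_weak_convergence
    {X : Type*} [NormedAddCommGroup X] [InnerProductSpace ℝ X] [CompleteSpace X]
    (Γ : Set ℝ) (hΓ : Γ ⊆ Set.Ioi (0:ℝ))
    (T : ℝ → X → X)
    (hfix : ∀ γ ∈ Γ, ∃ x : X, T γ x = x)
    (Q : ℝ → ℝ → X → X) (L : ℝ → ℝ → ℝ)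
    (hbij : ∀ γ ∈ Γ, ∀ δ ∈ Γ,
      Set.BijOn (Q δ γ) {x : X | T γ x = x} {x : X | T δ x = x})
    (hcontQ : ∀ γ ∈ Γ, ∀ x : X, T γ x = x → ContinuousOn (fun δ => Q δ γ x) Γ)
    (hsemi : ∀ γ ∈ Γ, ∀ δ ∈ Γ, ∀ ε ∈ Γ, ∀ x : X, T γ x = x →
      Q ε δ (Q δ γ x) = Q ε γ x)
    (hLone : ∀ γ ∈ Γ, ∀ δ ∈ Γ, 1 ≤ L δ γ)
    (hLip : ∀ γ ∈ Γ, ∀ δ ∈ Γ, ∀ x y : X, ‖Q δ γ x - Q δ γ y‖ ≤ L δ γ * ‖x - y‖)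
    (γseq : ℕ → ℝ) (hγΓ : ∀ n, γseq n ∈ Γ)
    (γbar : ℝ) (hγbar : γbar ∈ Γ)
    (hγconv : Tendsto γseq atTop (nhds γbar))
    (hLsum : Summable (fun n => L (γseq (n + 1)) (γseq n) - 1))
    (x : ℕ → X)
    (hxrec : ∀ n, x (n + 1) = Q (γseq (n + 1)) (γseq n) (T (γseq n) (x n)))
    (α : ℝ) (hα0 : 0 < α) (hα1 : α < 1)
    (havg : ∀ γ ∈ Γ, ∀ u v : X,
      ‖T γ u - T γ v‖ ^ 2 + ((1 - α) / α) * ‖(u - T γ u) - (v - T γ v)‖ ^ 2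
        ≤ ‖u - v‖ ^ 2)
    (hTcont : ContinuousOn (fun p : X × ℝ => T p.2 p.1) (Set.univ ×ˢ Γ)) :
    ∃ p : X, T γbar p = p ∧
      (∀ y : X, Tendsto (fun n => ⟪y, x n⟫) atTop (nhds ⟪y, p⟫)) ∧
      (∀ y : X, Tendsto (fun n => ⟪y, T (γseq n) (x n)⟫) atTop (nhds ⟪y, p⟫)) :=
  relocated_iteration_weak_convergence_general Γ T hfix Q L hbij hcontQ hsemi hLone hLip γseq hγΓ
    γbar hγbar hγconv hLsum x hxrec α hα0 hα1 havg hTcont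
end
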